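/- Let m0 ≥ 2, m1 ≥ m0, and let r solve the (m0,m1)-ODE with lim_{x→∞} r(x) = (2ℓ+1)·π/2 for some integer ℓ and lim_{x→∞} r'(x) = 0. Then |r'(x)| ≤ √(m1+1) for all x ≥ Z_α, where Z_α is the unique zero of α. -/

import Mathlib

open Filter

noncomputable def artanh (x : ℝ) : ℝ := (1/2) * Real.log ((1 + x) / (1 - x))

/-!
On `[Z_α, ∞)` the damping coefficient `α` is nonnegative and `β` is nondecreasing, so the
Lyapunov function `W = r'² / 2 + β sin² r` is nondecreasing there. Since `r` tends to a zero of
`cos` and `β → m1 / 2`, `W` tends to `m1 / 2`, hence `W ≤ m1 / 2` on `[Z_α, ∞)`. Together with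
`β ≥ β(Z_α) > -1/2` this gives `r'² ≤ m1 + 1`.
-/

open Set Topology

section Tanh

open Real

theorem Real.hasDerivAt_tanh (x : ℝ) : HasDerivAt tanh (1 / cosh x ^ 2) x := by
  have h := (hasDerivAt_sinh x).div (hasDerivAt_cosh x) (cosh_pos x).ne'
  rw [show tanh = sinh / cosh from funext fun y => tanh_eq_sinh_div_cosh y]
  exact h.congr_deriv (by rw [← cosh_sq_sub_sinh_sq x]; ring)

theorem Real.tanh_eq_one_sub_exp_div (x : ℝ) :
    tanh x = (1 - exp (-(2 * x))) / (1 + exp (-(2 * x))) := by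
  have h : exp x * exp (-x) = 1 := by rw [← exp_add, add_neg_cancel, exp_zero]
  rw [tanh_eq, show -(2 * x) = -x + -x by ring, exp_add,
    div_eq_div_iff (by positivity) (by positivity)]
  linear_combination 2 * exp (-x) * h

theorem Real.tendsto_tanh_atTop : Tendsto tanh atTop (𝓝 1) := by
  have he : Tendsto (fun x : ℝ => exp (-(2 * x))) atTop (𝓝 0) :=
    tendsto_exp_neg_atTop_nhds_zero.comp (tendsto_id.const_mul_atTop two_pos)
  have h := (he.const_sub 1).div (he.const_add 1) (by norm_num)
  rw [sub_zero, add_zero, div_one] at h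
  exact h.congr fun x => (tanh_eq_one_sub_exp_div x).symm

end Tanh

theorem artanh_eq_real_artanh {y : ℝ} (hy : y ∈ Icc (-1) 1) : artanh y = Real.artanh y := by
  rw [Real.artanh_eq_half_log hy, _root_.artanh]

theorem le_tanh_of_artanh_le {y x : ℝ} (hy : y ∈ Ioo (-1) 1) (hx : artanh y ≤ x) :
    y ≤ Real.tanh x := by
  rw [artanh_eq_real_artanh (Ioo_subset_Icc_self hy), ← Real.artanh_tanh x] at hx
  exact (Real.artanh_le_artanh_iff hy ⟨Real.neg_one_lt_tanh x, Real.tanh_lt_one x⟩).mp hx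

theorem MonotoneOn.le_of_tendsto_atTop {γ δ : Type*} [SemilatticeSup γ] [Nonempty γ]
    [Preorder δ] [TopologicalSpace δ] [ClosedIciTopology δ] {f : γ → δ} {a x : γ} {L : δ}
    (hf : MonotoneOn f (Ici a)) (hL : Tendsto f atTop (𝓝 L)) (hx : a ≤ x) : f x ≤ L :=
  ge_of_tendsto hL ((eventually_ge_atTop x).mono fun _ ht => hf hx (hx.trans ht) ht)

section Lyapunov

open Real

variable {α β r r' : ℝ → ℝ}

noncomputable def lyapunov (β r r' : ℝ → ℝ) (x : ℝ) : ℝ := r' x ^ 2 / 2 + β x * sin (r x) ^ 2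

theorem hasDerivAt_lyapunov {β' x : ℝ} (hr : HasDerivAt r (r' x) x)
    (hr' : HasDerivAt r' (α x * r' x - β x * sin (2 * r x)) x) (hβ : HasDerivAt β β' x) :
    HasDerivAt (lyapunov β r r') (α x * r' x ^ 2 + β' * sin (r x) ^ 2) x := by
  have hsin := (hasDerivAt_sin (r x)).comp x hr
  refine (((hr'.pow 2).div_const 2).add (hβ.mul (hsin.pow 2))).congr_deriv ?_
  simp only [Pi.pow_apply, Function.comp_apply, sin_two_mul]
  ring

theorem monotoneOn_lyapunov {β' : ℝ → ℝ} {a : ℝ} (hr : ∀ x, HasDerivAt r (r' x) x)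
    (hr' : ∀ x, HasDerivAt r' (α x * r' x - β x * sin (2 * r x)) x)
    (hβ : ∀ x, HasDerivAt β (β' x) x) (hα_nonneg : ∀ x, a ≤ x → 0 ≤ α x)
    (hβ'_nonneg : ∀ x, a ≤ x → 0 ≤ β' x) :
    MonotoneOn (lyapunov β r r') (Ici a) := by
  have hW x := hasDerivAt_lyapunov (hr x) (hr' x) (hβ x)
  have hdiff : Differentiable ℝ (lyapunov β r r') := fun x => (hW x).differentiableAt
  refine monotoneOn_of_deriv_nonneg (convex_Ici a) hdiff.continuous.continuousOn
    hdiff.differentiableOn fun x hx => ?_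
  rw [interior_Ici] at hx
  have := hα_nonneg x hx.le
  have := hβ'_nonneg x hx.le
  rw [(hW x).deriv]
  positivity

theorem tendsto_lyapunov {θ b : ℝ} (hθ : cos θ = 0) (hr : Tendsto r atTop (𝓝 θ))
    (hr' : Tendsto r' atTop (𝓝 0)) (hβ : Tendsto β atTop (𝓝 b)) :
    Tendsto (lyapunov β r r') atTop (𝓝 b) := by
  have hsin : sin θ ^ 2 = 1 := by rw [sin_sq, hθ]; norm_num
  have h := ((hr'.pow 2).div_const 2).add (hβ.mul (((continuous_sin.tendsto θ).comp hr).pow 2))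
  rwa [hsin, zero_pow two_ne_zero, zero_div, zero_add, mul_one] at h

theorem abs_le_sqrt_of_lyapunov_le {E c x : ℝ} (hW : lyapunov β r r' x ≤ E) (hβ : -c ≤ β x)
    (hc : 0 ≤ c) : |r' x| ≤ √(2 * (E + c)) := by
  have hsin := sin_sq_le_one (r x)
  have : -c ≤ β x * sin (r x) ^ 2 := by
    nlinarith [mul_le_mul_of_nonneg_right hβ (sq_nonneg (sin (r x)))]
  rw [← sqrt_sq_eq_abs]
  exact sqrt_le_sqrt (by unfold lyapunov at hW; linarith)

end Lyapunov

section Coefficients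

variable {a b x : ℝ}

/-- `Z_α`, the zero of `α`. -/
noncomputable def zAlpha (a b : ℝ) : ℝ := artanh ((a - b) / (a + b - 2))

theorem div_mem_Ioo_neg_one_one (ha : 1 < a) (hb : 1 < b) :
    (a - b) / (a + b - 2) ∈ Ioo (-1) 1 := by
  have hd : 0 < a + b - 2 := by linarith
  constructor
  · rw [lt_div_iff₀ hd]; linarith
  · rw [div_lt_one hd]; linarith

theorem sub_le_mul_tanh_of_zAlpha_le (ha : 1 < a) (hb : 1 < b) (hx : zAlpha a b ≤ x) :
    a - b ≤ (a + b - 2) * Real.tanh x :=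
  (div_le_iff₀' (by linarith)).mp (le_tanh_of_artanh_le (div_mem_Ioo_neg_one_one ha hb) hx)

theorem alpha_coeff_nonneg (ha : 1 < a) (hb : 1 < b) (hx : zAlpha a b ≤ x) :
    0 ≤ (a + b - 2) * Real.tanh x + b - a := by
  linarith [sub_le_mul_tanh_of_zAlpha_le ha hb hx]

theorem neg_two_lt_beta_coeff (ha : 1 < a) (hb : 1 < b) (hx : zAlpha a b ≤ x) :
    -2 < (a + b) * Real.tanh x + b - a := by
  linarith [sub_le_mul_tanh_of_zAlpha_le ha hb hx, Real.neg_one_lt_tanh x]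

end Coefficients

/-- If r solves the (m0,m1)-ODE with r(x) → (2ℓ+1)π/2 and r'(x) → 0 as x → ∞,
then |r'(x)| ≤ √(m1+1) for all x ≥ Z_α, the unique zero of α. -/
theorem deriv_bound_right_of_Zalpha (m0 m1 : ℕ) (hm0 : 2 ≤ m0) (hm1 : m0 ≤ m1)
    (α β : ℝ → ℝ)
    (hα : ∀ x, α x = (1/2) * (((m0:ℝ) + m1 - 2) * Real.tanh x + m1 - m0))
    (hβ : ∀ x, β x = (1/4) * (((m0:ℝ) + m1) * Real.tanh x + m1 - m0))
    (r r' : ℝ → ℝ)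
    (hr : ∀ x, HasDerivAt r (r' x) x)
    (hr' : ∀ x, HasDerivAt r' (α x * r' x - β x * Real.sin (2 * r x)) x)
    (ℓ : ℤ)
    (hlim : Tendsto r atTop (nhds ((2 * (ℓ:ℝ) + 1) * Real.pi / 2)))
    (hlim' : Tendsto r' atTop (nhds 0)) :
    ∀ x : ℝ, artanh (((m0:ℝ) - m1) / ((m0:ℝ) + m1 - 2)) ≤ x →
      |r' x| ≤ Real.sqrt ((m1:ℝ) + 1) := by
  intro x hx
  have ha : (1 : ℝ) < m0 := by exact_mod_cast hm0
  have hb : (1 : ℝ) < m1 := by exact_mod_cast hm0.trans hm1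
  have hβ_deriv (t : ℝ) : HasDerivAt β ((1/4) * (((m0:ℝ) + m1) * (1 / Real.cosh t ^ 2))) t := by
    rw [funext hβ]
    exact ((((Real.hasDerivAt_tanh t).const_mul _).add_const _).sub_const _).const_mul _
  have hβ_lim : Tendsto β atTop (𝓝 ((m1:ℝ) / 2)) := by
    rw [funext hβ]
    convert (((Real.tendsto_tanh_atTop.const_mul _).add_const _).sub_const _).const_mul (1/4 : ℝ)
      using 2
    ring
  have hmono : MonotoneOn (lyapunov β r r') (Ici (zAlpha m0 m1)) :=
    monotoneOn_lyapunov hr hr' hβ_deriv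
      (fun t ht => by rw [hα]; linarith [alpha_coeff_nonneg ha hb ht]) (fun t _ => by positivity)
  have hW : lyapunov β r r' x ≤ m1 / 2 :=
    hmono.le_of_tendsto_atTop
      (tendsto_lyapunov (Real.cos_eq_zero_iff.mpr ⟨ℓ, rfl⟩) hlim hlim' hβ_lim) hx
  have hβ_ge : -(1/2) ≤ β x := by rw [hβ]; linarith [neg_two_lt_beta_coeff ha hb hx]
  convert abs_le_sqrt_of_lyapunov_le hW hβ_ge (by norm_num) using 2
  ring
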